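/- arXiv:1208.3071 — 3 statements merged into one kernel-verified Lean document; each statement's English description precedes it below -/
import Mathlib

section
/- Let n ≥ 1, let 0 < ε < 1, let Q be an n×n row-stochastic matrix, let P = (ε/n)·J + (1−ε)·Q where J is the n×n all-ones matrix, and let π be a stationary distribution of P. Then for every probability row vector μ and every t ∈ ℕ, Σ_v |(μP^t)_v − π_v| ≤ (1−ε)^t · Σ_v |μ_v − π_v|; in particular μP^t converges to π in ℓ¹ at geometric rate (1−ε)^t. -/
/-!
For a vector `x` with coordinate sum zero the rank-one part `(ε/n)·J` of `P` contributes
nothing, so `x P = (1 − ε) x Q`; a row-stochastic `Q` is an `ℓ¹` contraction and preserves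
coordinate sums, so `P` contracts zero-sum vectors by the factor `1 − ε`. Since `π P = π`,
`μ Pᵗ − π = (μ − π) Pᵗ`, and `μ − π` has sum zero.
-/

open Matrix Finset

namespace Matrix

variable {ι R : Type*} [Fintype ι] [CommRing R] {x : ι → R}

theorem vecMul_smul_ones_eq_zero {κ : Type*} (hx : ∑ i, x i = 0) (c : R) :
    x ᵥ* (c • of fun _ _ => 1 : Matrix ι κ R) = 0 := by
  ext j
  simp [vecMul, dotProduct, ← sum_mul, hx]

theorem vecMul_smul_ones_add_smul_of_sum_eq_zero (hx : ∑ i, x i = 0) (c s : R)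
    (Q : Matrix ι ι R) : x ᵥ* ((c • of fun _ _ => 1) + s • Q) = s • (x ᵥ* Q) := by
  rw [vecMul_add, vecMul_smul_ones_eq_zero hx, zero_add, vecMul_smul]

theorem vecMul_pow_eq_self_of_vecMul_eq_self [DecidableEq ι] {M : Matrix ι ι R}
    (h : x ᵥ* M = x) (t : ℕ) : x ᵥ* M ^ t = x := by
  induction t with
  | zero => simp
  | succ t ih => rw [pow_succ, ← vecMul_vecMul, ih, h]

section Ordered

variable [LinearOrder R] [IsStrictOrderedRing R] [DecidableEq ι] {M Q : Matrix ι ι R}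

theorem sum_vecMul_of_mem_rowStochastic (hM : M ∈ rowStochastic R ι) (x : ι → R) :
    ∑ j, (x ᵥ* M) j = ∑ i, x i := by
  rw [← dotProduct_one, ← dotProduct_mulVec, hM.2, dotProduct_one]

theorem sum_abs_vecMul_le_of_mem_rowStochastic (hM : M ∈ rowStochastic R ι) (x : ι → R) :
    ∑ j, |(x ᵥ* M) j| ≤ ∑ i, |x i| :=
  calc ∑ j, |(x ᵥ* M) j| ≤ ∑ j, ∑ i, |x i| * M i j := by
        refine sum_le_sum fun j _ => (abs_sum_le_sum_abs _ _).trans_eq ?_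
        simp only [abs_mul, abs_of_nonneg (hM.1 _ j)]
    _ = ∑ i, |x i| := by
        rw [sum_comm]
        simp only [← mul_sum, sum_row_of_mem_rowStochastic hM, mul_one]

theorem sum_abs_vecMul_pow_le {s : R} (hs : 0 ≤ s)
    (hsum : ∀ x : ι → R, ∑ i, x i = 0 → ∑ j, (x ᵥ* M) j = 0)
    (hcontr : ∀ x : ι → R, ∑ i, x i = 0 → ∑ j, |(x ᵥ* M) j| ≤ s * ∑ i, |x i|)
    (t : ℕ) : ∀ x : ι → R, ∑ i, x i = 0 →
      ∑ j, |(x ᵥ* M ^ t) j| ≤ s ^ t * ∑ i, |x i| := by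
  induction t with
  | zero => simp
  | succ t ih =>
    intro x hx
    rw [pow_succ', ← vecMul_vecMul]
    calc ∑ j, |((x ᵥ* M) ᵥ* M ^ t) j| ≤ s ^ t * ∑ i, |(x ᵥ* M) i| := ih _ (hsum x hx)
      _ ≤ s ^ t * (s * ∑ i, |x i|) := by gcongr; exact hcontr x hx
      _ = s ^ (t + 1) * ∑ i, |x i| := by ring

theorem sum_vecMul_smul_ones_add_smul_eq_zero (hQ : Q ∈ rowStochastic R ι)
    (hx : ∑ i, x i = 0) (c s : R) :
    ∑ j, (x ᵥ* ((c • of fun _ _ => 1) + s • Q)) j = 0 := by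
  simp only [vecMul_smul_ones_add_smul_of_sum_eq_zero hx, Pi.smul_apply, smul_eq_mul,
    ← mul_sum, sum_vecMul_of_mem_rowStochastic hQ, hx, mul_zero]

theorem sum_abs_vecMul_smul_ones_add_smul_le (hQ : Q ∈ rowStochastic R ι)
    (hx : ∑ i, x i = 0) (c : R) {s : R} (hs : 0 ≤ s) :
    ∑ j, |(x ᵥ* ((c • of fun _ _ => 1) + s • Q)) j| ≤ s * ∑ i, |x i| := by
  simp only [vecMul_smul_ones_add_smul_of_sum_eq_zero hx, Pi.smul_apply, smul_eq_mul, abs_mul,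
    abs_of_nonneg hs, ← mul_sum]
  exact mul_le_mul_of_nonneg_left (sum_abs_vecMul_le_of_mem_rowStochastic hQ x) hs

end Ordered

end Matrix

theorem pagerank_power_iteration_geometric_convergence_general
    (n : ℕ) (ε : ℝ) (hε1 : ε < 1)
    (Q P : Matrix (Fin n) (Fin n) ℝ)
    (hQ0 : ∀ u v, 0 ≤ Q u v) (hQ1 : ∀ u, ∑ v, Q u v = 1)
    (hP : P = (ε / n) • (Matrix.of fun _ _ => (1 : ℝ)) + (1 - ε) • Q)
    (pr : Fin n → ℝ)
    (hpr1 : ∑ v, pr v = 1)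
    (hstat : ∀ v, ∑ u, pr u * P u v = pr v) :
    ∀ (μ : Fin n → ℝ), (∀ v, 0 ≤ μ v) → (∑ v, μ v = 1) →
      ∀ t : ℕ,
        ∑ v, |(∑ u, μ u * (P ^ t) u v) - pr v| ≤ (1 - ε) ^ t * ∑ v, |μ v - pr v| := by
  intro μ _ hμ1 t
  have hQ : Q ∈ rowStochastic ℝ (Fin n) := mem_rowStochastic_iff_sum.2 ⟨hQ0, hQ1⟩
  have hs : 0 ≤ 1 - ε := by linarith
  have hdiff : ∑ v, (μ - pr) v = 0 := by simp [sum_sub_distrib, hμ1, hpr1]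
  have hshift : μ ᵥ* P ^ t - pr = (μ - pr) ᵥ* P ^ t := by
    rw [sub_vecMul, vecMul_pow_eq_self_of_vecMul_eq_self (funext hstat)]
  have hcontr := sum_abs_vecMul_pow_le hs
    (fun x hx => hP ▸ sum_vecMul_smul_ones_add_smul_eq_zero hQ hx _ _)
    (fun x hx => hP ▸ sum_abs_vecMul_smul_ones_add_smul_le hQ hx _ hs) t _ hdiff
  rwa [← hshift] at hcontr

/-- Iterates of the PageRank transition matrix `P = (ε/n)·J + (1−ε)·Q` converge to the
stationary distribution `π` in ℓ¹ at geometric rate `(1−ε)^t`: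
for every probability vector `μ` and every `t`,
`‖μ Pᵗ − π‖₁ ≤ (1−ε)^t · ‖μ − π‖₁`. -/
theorem pagerank_power_iteration_geometric_convergence
    (n : ℕ) (hn : 1 ≤ n) (ε : ℝ) (hε0 : 0 < ε) (hε1 : ε < 1)
    (Q P : Matrix (Fin n) (Fin n) ℝ)
    (hQ0 : ∀ u v, 0 ≤ Q u v) (hQ1 : ∀ u, ∑ v, Q u v = 1)
    (hP : P = (ε / n) • (Matrix.of fun _ _ => (1 : ℝ)) + (1 - ε) • Q)
    (pr : Fin n → ℝ)
    (hpr0 : ∀ v, 0 ≤ pr v) (hpr1 : ∑ v, pr v = 1)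
    (hstat : ∀ v, ∑ u, pr u * P u v = pr v) :
    ∀ (μ : Fin n → ℝ), (∀ v, 0 ≤ μ v) → (∑ v, μ v = 1) →
      ∀ t : ℕ,
        ∑ v, |(∑ u, μ u * (P ^ t) u v) - pr v| ≤ (1 - ε) ^ t * ∑ v, |μ v - pr v| :=
  pagerank_power_iteration_geometric_convergence_general n ε hε1 Q P hQ0 hQ1 hP pr hpr1 hstat
end

section
/- Let n ≥ 1, let 0 < ε < 1, let Q be an n×n row-stochastic matrix, let P = (ε/n)·J + (1−ε)·Q, and let π be the stationary distribution of P. Then for every vertex v, π_v = (ε/n) · Σ_{t=0}^∞ (1−ε)^t · Σ_u (Q^t)_{u,v}. Equivalently, the PageRank of v equals ε/n times the expected total number of visits to v made by ε-terminated random walks started once from every vertex (the Monte Carlo estimator π̃_v = ζ_v·ε/(nK) is unbiased). -/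
/-- Monte Carlo identity for PageRank: the stationary distribution of
`P = (ε/n)·J + (1−ε)·Q` satisfies, for every vertex `v`,
`π_v = (ε/n) · Σ_{t=0}^∞ (1−ε)^t · Σ_u (Q^t)_{u,v}`, i.e. `ε/n` times the expected
total number of visits to `v` by ε-terminated walks started once from every vertex. -/
theorem pagerank_monte_carlo_unbiased
    (n : ℕ) (hn : 1 ≤ n) (ε : ℝ) (hε0 : 0 < ε) (hε1 : ε < 1)
    (Q P : Matrix (Fin n) (Fin n) ℝ)
    (hQ0 : ∀ u v, 0 ≤ Q u v) (hQ1 : ∀ u, ∑ v, Q u v = 1)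
    (hP : P = (ε / n) • (Matrix.of fun _ _ => (1 : ℝ)) + (1 - ε) • Q)
    (pr : Fin n → ℝ)
    (hpr0 : ∀ v, 0 ≤ pr v) (hpr1 : ∑ v, pr v = 1)
    (hstat : ∀ v, ∑ u, pr u * P u v = pr v) :
    ∀ v, pr v = (ε / n) * ∑' t : ℕ, (1 - ε) ^ t * ∑ u, (Q ^ t) u v := by
  intro v
  have hε1' : (0:ℝ) ≤ 1 - ε := by linarith
  have hε1'' : (1:ℝ) - ε < 1 := by linarith
  -- nonnegativity of entries of powers
  have hQp0 : ∀ t : ℕ, ∀ u w, 0 ≤ (Q ^ t) u w := by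
    intro t
    induction t with
    | zero =>
      intro u w
      simp only [pow_zero, Matrix.one_apply]
      split <;> norm_num
    | succ t ih =>
      intro u w
      rw [pow_succ, Matrix.mul_apply]
      exact Finset.sum_nonneg fun x _ => mul_nonneg (ih u x) (hQ0 x w)
  -- row sums of powers
  have hQp1 : ∀ t : ℕ, ∀ u, ∑ w, (Q ^ t) u w = 1 := by
    intro t
    induction t with
    | zero => intro u; simp [Matrix.one_apply]
    | succ t ih =>
      intro u
      simp only [pow_succ, Matrix.mul_apply]
      rw [Finset.sum_comm]
      simp only [← Finset.mul_sum, hQ1, mul_one]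
      exact ih u
  have hQple1 : ∀ t : ℕ, ∀ u w, (Q ^ t) u w ≤ 1 := by
    intro t u w
    calc (Q ^ t) u w ≤ ∑ x, (Q ^ t) u x :=
          Finset.single_le_sum (fun x _ => hQp0 t u x) (Finset.mem_univ w)
      _ = 1 := hQp1 t u
  -- rewritten stationarity
  have hkey : ∀ w, ε / n + (1 - ε) * ∑ u, pr u * Q u w = pr w := by
    intro w
    rw [← hstat w, hP]
    simp only [Matrix.add_apply, Matrix.smul_apply, Matrix.of_apply, smul_eq_mul, mul_one]
    have expand : ∑ x, pr x * (ε / ↑n + (1 - ε) * Q x w)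
        = (∑ x, pr x) * (ε / ↑n) + (1 - ε) * ∑ x, pr x * Q x w := by
      calc ∑ x, pr x * (ε / ↑n + (1 - ε) * Q x w)
          = ∑ x, (pr x * (ε / ↑n) + (1 - ε) * (pr x * Q x w)) :=
            Finset.sum_congr rfl fun x _ => by ring
        _ = (∑ x, pr x) * (ε / ↑n) + (1 - ε) * ∑ x, pr x * Q x w := by
            rw [Finset.sum_add_distrib, Finset.sum_mul, Finset.mul_sum]
    rw [expand, hpr1]
    ring
  -- partial-sum identity
  have hpartial : ∀ T : ℕ,
      pr v = (ε / n) * ∑ t ∈ Finset.range T, (1 - ε) ^ t * ∑ u, (Q ^ t) u v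
           + (1 - ε) ^ T * ∑ u, pr u * (Q ^ T) u v := by
    intro T
    induction T with
    | zero => simp [Matrix.one_apply]
    | succ T ih =>
      have hstep : ∑ u, pr u * (Q ^ T) u v
          = ε / n * ∑ u, (Q ^ T) u v + (1 - ε) * ∑ u, pr u * (Q ^ (T + 1)) u v := by
        have h1 : ∀ u, pr u * (Q ^ T) u v
            = ε / n * (Q ^ T) u v + (1 - ε) * ∑ w, pr w * Q w u * (Q ^ T) u v := by
          intro u
          rw [← hkey u, add_mul, mul_assoc, Finset.sum_mul]
        rw [Finset.sum_congr rfl (fun u _ => h1 u), Finset.sum_add_distrib,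
          ← Finset.mul_sum, ← Finset.mul_sum]
        congr 1
        congr 1
        rw [Finset.sum_comm]
        rw [pow_succ']
        simp only [Matrix.mul_apply, Finset.mul_sum]
        apply Finset.sum_congr rfl
        intro w _
        apply Finset.sum_congr rfl
        intro u _
        ring
      rw [Finset.sum_range_succ]
      calc pr v = (ε / n) * ∑ t ∈ Finset.range T, (1 - ε) ^ t * ∑ u, (Q ^ t) u v
            + (1 - ε) ^ T * ∑ u, pr u * (Q ^ T) u v := ih
        _ = _ := by rw [hstep]; ring
  -- summability
  set g : ℕ → ℝ := fun t => (1 - ε) ^ t * ∑ u, (Q ^ t) u v with hg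
  have hg0 : ∀ t, 0 ≤ g t := fun t =>
    mul_nonneg (pow_nonneg hε1' t) (Finset.sum_nonneg fun u _ => hQp0 t u v)
  have hgle : ∀ t, g t ≤ (n : ℝ) * (1 - ε) ^ t := by
    intro t
    have : ∑ u, (Q ^ t) u v ≤ (n : ℝ) := by
      calc ∑ u, (Q ^ t) u v ≤ ∑ _u : Fin n, (1 : ℝ) :=
            Finset.sum_le_sum fun u _ => hQple1 t u v
        _ = (n : ℝ) := by simp
    calc g t = (1 - ε) ^ t * ∑ u, (Q ^ t) u v := rfl
      _ ≤ (1 - ε) ^ t * (n : ℝ) := by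
          exact mul_le_mul_of_nonneg_left this (pow_nonneg hε1' t)
      _ = (n : ℝ) * (1 - ε) ^ t := by ring
  have hsum : Summable g := by
    apply Summable.of_nonneg_of_le hg0 hgle
    exact (summable_geometric_of_lt_one hε1' hε1'').mul_left _
  -- remainder tends to 0
  have hrem : Filter.Tendsto (fun T : ℕ => (1 - ε) ^ T * ∑ u, pr u * (Q ^ T) u v)
      Filter.atTop (nhds 0) := by
    have hpow : Filter.Tendsto (fun T : ℕ => (1 - ε) ^ T) Filter.atTop (nhds 0) :=
      tendsto_pow_atTop_nhds_zero_of_lt_one hε1' hε1''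
    apply squeeze_zero
    · intro T
      exact mul_nonneg (pow_nonneg hε1' T)
        (Finset.sum_nonneg fun u _ => mul_nonneg (hpr0 u) (hQp0 T u v))
    · intro T
      have : ∑ u, pr u * (Q ^ T) u v ≤ 1 := by
        calc ∑ u, pr u * (Q ^ T) u v ≤ ∑ u, pr u :=
              Finset.sum_le_sum fun u _ => by
                calc pr u * (Q ^ T) u v ≤ pr u * 1 :=
                      mul_le_mul_of_nonneg_left (hQple1 T u v) (hpr0 u)
                  _ = pr u := mul_one _
          _ = 1 := hpr1
      calc (1 - ε) ^ T * ∑ u, pr u * (Q ^ T) u v ≤ (1 - ε) ^ T * 1 :=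
            mul_le_mul_of_nonneg_left this (pow_nonneg hε1' T)
        _ = (1 - ε) ^ T := mul_one _
    · exact hpow
  -- combine
  have h1 : Filter.Tendsto (fun T : ℕ => (ε / n) * ∑ t ∈ Finset.range T, g t)
      Filter.atTop (nhds ((ε / n) * ∑' t, g t)) :=
    (hsum.hasSum.tendsto_sum_nat).const_mul _
  have h2 : Filter.Tendsto (fun T : ℕ => (ε / n) * ∑ t ∈ Finset.range T, g t)
      Filter.atTop (nhds (pr v)) := by
    have : (fun T : ℕ => (ε / n) * ∑ t ∈ Finset.range T, g t)
        = fun T : ℕ => pr v - (1 - ε) ^ T * ∑ u, pr u * (Q ^ T) u v := by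
      funext T
      have := hpartial T
      linarith
    rw [this]
    have := (tendsto_const_nhds (x := pr v) (f := Filter.atTop (α := ℕ))).sub hrem
    simpa using this
  simpa [hg] using tendsto_nhds_unique h2 h1
end

section
/- Let G be a finite simple undirected graph in which every vertex has positive degree, let Q be its simple random walk matrix (Q_{u,v} = 1/deg(u) if u ∼ v, else 0), and let 0 < ε < 1. Then for every vertex v, the expected total number of visits to v by ε-terminated random walks started once from each node satisfies Σ_{t=0}^∞ (1−ε)^t · Σ_u (Q^t)_{u,v} ≤ 1 + deg(v)·(1−ε)/ε. In particular the expected number of visits to v is O(deg(v)/ε). -/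
/-!
The degree vector is a stationary measure of the simple random walk: `Σ_u deg u · Q u v = deg v`,
hence also of every power `Q ^ t`. As all degrees are at least `1` and `Q ^ t` is entrywise
nonnegative, every column sum `Σ_u (Q ^ t) u v` is at most `deg v`. The column sum at `t = 0`
is `1`, and summing the geometric series over `t ≥ 1` gives `deg v · (1 - ε) / ε`.
-/

open Finset Matrix

namespace Matrix

variable {n R : Type*} [Fintype n]

theorem vecMul_pow_eq_self [DecidableEq n] [Semiring R] {P : Matrix n n R} {π : n → R}
    (hπ : π ᵥ* P = π) (t : ℕ) : π ᵥ* (P ^ t) = π := by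
  induction t with
  | zero => simp
  | succ t ih => rw [pow_succ, ← vecMul_vecMul, ih, hπ]

theorem sum_apply_le_of_vecMul_eq_self [Semiring R] [PartialOrder R] [IsOrderedRing R]
    {P : Matrix n n R} (hP : ∀ i j, 0 ≤ P i j) {π : n → R} (hπ : π ᵥ* P = π)
    (hπ1 : ∀ i, 1 ≤ π i) (j : n) : ∑ i, P i j ≤ π j :=
  calc ∑ i, P i j ≤ ∑ i, π i * P i j :=
        sum_le_sum fun i _ => le_mul_of_one_le_left (hP i j) (hπ1 i)
    _ = π j := congrFun hπ j

end Matrix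

theorem tsum_geometric_mul_le {r d : ℝ} (hr0 : 0 ≤ r) (hr1 : r < 1) {c : ℕ → ℝ}
    (hc0 : ∀ t, 0 ≤ c t) (hcd : ∀ t, c t ≤ d) :
    ∑' t, r ^ t * c t ≤ c 0 + d * r / (1 - r) := by
  have hgeom : Summable fun t : ℕ => d * r ^ t :=
    (summable_geometric_of_lt_one hr0 hr1).mul_left d
  have hbound : ∀ t, r ^ t * c t ≤ d * r ^ t := fun t => by
    rw [mul_comm d]; exact mul_le_mul_of_nonneg_left (hcd t) (pow_nonneg hr0 t)
  have hsum : Summable fun t => r ^ t * c t :=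
    hgeom.of_nonneg_of_le (fun t => mul_nonneg (pow_nonneg hr0 t) (hc0 t)) hbound
  rw [hsum.tsum_eq_zero_add, pow_zero, one_mul]
  gcongr
  calc ∑' t, r ^ (t + 1) * c (t + 1) ≤ ∑' t, d * r ^ (t + 1) :=
        ((summable_nat_add_iff 1).2 hsum).tsum_le_tsum (fun t => hbound (t + 1))
          ((summable_nat_add_iff 1).2 hgeom)
    _ = d * r / (1 - r) := by
        simp_rw [pow_succ, ← mul_assoc, tsum_mul_right, tsum_mul_left,
          tsum_geometric_of_lt_one hr0 hr1]
        field_simp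

namespace SimpleGraph

variable {V : Type*} [Fintype V] (G : SimpleGraph V) [DecidableRel G.Adj]

theorem degree_vecMul_randomWalk_eq_degree {Q : Matrix V V ℝ}
    (hQ : ∀ u v, Q u v = if G.Adj u v then ((G.degree u : ℝ))⁻¹ else 0)
    (hdeg : ∀ v, 0 < G.degree v) :
    (fun v => (G.degree v : ℝ)) ᵥ* Q = fun v => (G.degree v : ℝ) := by
  ext v
  have hterm : ∀ u, (G.degree u : ℝ) * Q u v = if G.Adj v u then 1 else 0 := fun u => by
    by_cases h : G.Adj u v
    · rw [hQ, if_pos h, if_pos h.symm, mul_inv_cancel₀ (Nat.cast_ne_zero.2 (hdeg u).ne')]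
    · rw [hQ, if_neg h, if_neg (mt G.adj_symm h), mul_zero]
  rw [vecMul, dotProduct]
  simp only [hterm, sum_boole, ← neighborFinset_eq_filter, card_neighborFinset_eq_degree]

end SimpleGraph

/-- The expected total number of visits to a vertex `v` by ε-terminated random walks
started once from each node of a finite simple undirected graph satisfies
`Σ_{t=0}^∞ (1−ε)^t · Σ_u (Q^t)_{u,v} ≤ 1 + deg(v)·(1−ε)/ε`;
in particular it is `O(deg(v)/ε)`. -/
theorem expected_visits_bound
    (V : Type*) [Fintype V] [DecidableEq V] (G : SimpleGraph V) [DecidableRel G.Adj]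
    (hdeg : ∀ v, 0 < G.degree v)
    (Q : Matrix V V ℝ)
    (hQ : ∀ u v, Q u v = if G.Adj u v then ((G.degree u : ℝ))⁻¹ else 0)
    (ε : ℝ) (hε0 : 0 < ε) (hε1 : ε < 1) :
    ∀ v, ∑' t : ℕ, (1 - ε) ^ t * ∑ u, (Q ^ t) u v ≤
      1 + (G.degree v : ℝ) * (1 - ε) / ε := by
  intro v
  have hQ0 : ∀ u w, 0 ≤ Q u w := fun u w => by rw [hQ]; split_ifs <;> positivity
  have hcol : ∀ t, ∑ u, (Q ^ t) u v ≤ G.degree v :=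
    fun t => sum_apply_le_of_vecMul_eq_self (pow_apply_nonneg hQ0 t)
      (vecMul_pow_eq_self (G.degree_vecMul_randomWalk_eq_degree hQ hdeg) t)
      (fun u => Nat.one_le_cast.2 (hdeg u)) v
  have hbound := tsum_geometric_mul_le (by linarith) (by linarith : 1 - ε < 1)
    (fun t => sum_nonneg fun u _ => pow_apply_nonneg hQ0 t u v) hcol
  simpa [one_apply, sub_sub_cancel] using hbound
end
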